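/- arXiv:math/0203051 — 3 statements merged into one kernel-verified Lean document; each statement's English description precedes it below -/
import Mathlib

section
/- There is no family of antiunitary operators J_n on ℂⁿ for n ∈ ℕ such that J_m ⊗ J_n := ϑ ∘ (J_m ⊗ J_n ordinary antilinear tensor product composed with the flip identification ℂ^m ⊗ ℂ^n ≅ ℂ^n ⊗ ℂ^m ≅ ℂ^{mn} via lexicographic ordering) satisfies the strict conjugation requirement J₂ × J₃ = J₃ × J₂ as operators on ℂ⁶. However, defining J_m e_i := e_{m+1−i} on the standard basis gives antiunitary involutions with J_m ⊗ J_n = J_{mn} = J_n ⊗ J_m under the lexicographic identification ℂ^m ⊗ ℂ^n ≅ ℂ^{mn} (where here ⊗ is the ordinary antilinear tensor product without flip). -/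
open scoped ComplexConjugate

/-- Lexicographic identification `ℂ^m ⊗ ℂ^n ≅ ℂ^{mn}`: `e_i ⊗ e_j ↦ e_{(i-1)n+j}`
(0-based: `(i,j) ↦ i·n + j`). -/
def lexF {m n : ℕ} (p : Fin m × Fin n) : Fin (m * n) :=
  ⟨p.1.val * n + p.2.val, by
    calc p.1.val * n + p.2.val < p.1.val * n + n := by omega
      _ = (p.1.val + 1) * n := by ring
      _ ≤ m * n := Nat.mul_le_mul_right n p.1.isLt⟩

/-- Inverse of the lexicographic identification. -/
def unlexF {m n : ℕ} (x : Fin (m * n)) : Fin m × Fin n :=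
  have hn : 0 < n := by
    rcases Nat.eq_zero_or_pos n with h | h
    · exact absurd x.isLt (by subst h; simp)
    · exact h
  (⟨x.val / n, Nat.div_lt_of_lt_mul (Nat.mul_comm m n ▸ x.isLt)⟩,
   ⟨x.val % n, Nat.mod_lt _ hn⟩)

/-- The ordinary antilinear tensor product `A ⊗ B` of antilinear operators,
determined by `(A ⊗ B)(x ⊗ y) = Ax ⊗ By`. -/
noncomputable def tensA {a b c d : Type*} [Fintype a] [DecidableEq a]
    [Fintype c] [DecidableEq c]
    (A : (a → ℂ) → (b → ℂ)) (B : (c → ℂ) → (d → ℂ)) (v : a × c → ℂ) :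
    b × d → ℂ :=
  fun p => ∑ k, ∑ l, A (Pi.single k 1) p.1 * B (Pi.single l 1) p.2 * conj (v (k, l))

/-- The flipped tensor product `ϑ ∘ (A ⊗ B)` used for antilinear arrows. -/
noncomputable def tensAflip {a b c d : Type*} [Fintype a] [DecidableEq a]
    [Fintype c] [DecidableEq c]
    (A : (a → ℂ) → (b → ℂ)) (B : (c → ℂ) → (d → ℂ)) (v : a × c → ℂ) :
    d × b → ℂ :=
  fun p => tensA A B v (p.2, p.1)

/-- The basis-reversing antiunitary `J_m e_i := e_{m+1-i}` on `ℂ^m`. -/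
noncomputable def Jrev (m : ℕ) (v : Fin m → ℂ) : Fin m → ℂ :=
  fun i => conj (v i.rev)

/-!
Write `J v = A (conj v)` with `A` the matrix of `J`. Tested on basis vectors,
`J₂ × J₃ = J₃ × J₂` equates each entry `a_{pk} b_{ql}` of `A₂ ⊗ A₃` with another such product,
because the two lexicographic orders of `ℂ⁶` pair the indices differently. A case analysis on
the first row of the invertible `A₂` then shows that `A₃` has a zero row or two equal rows,
contradicting its invertibility.

For the reversals, `J_m ⊗ J_n` reverses both tensor indices, and the lexicographic order sends
`(m-1-i, n-1-j)` to `mn-1-(in+j)`, so `J_m ⊗ J_n` is the reversal of `ℂ^{mn}`.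
-/

theorem lexF_eq_finProdFinEquiv {m n : ℕ} (p : Fin m × Fin n) : lexF p = finProdFinEquiv p := by
  ext; simp [lexF, finProdFinEquiv_apply_val, Nat.mul_comm, Nat.add_comm]

theorem lexF_unlexF {m n : ℕ} (u : Fin (m * n)) : lexF (unlexF u) = u := by
  rw [lexF_eq_finProdFinEquiv]
  exact finProdFinEquiv.apply_symm_apply u

theorem lexF_rev {m n : ℕ} (i : Fin m) (j : Fin n) : lexF (i.rev, j.rev) = (lexF (i, j)).rev := by
  ext
  have hj := j.isLt
  have hi : (i.val + 1) * n ≤ m * n := Nat.mul_le_mul_right n i.isLt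
  have hsub : (m - (i.val + 1)) * n = m * n - (i.val + 1) * n := Nat.sub_mul _ _ _
  simp only [lexF, Fin.val_rev, Nat.add_mul, one_mul] at hi hsub ⊢
  omega

theorem single_comp_lexF {m n : ℕ} (c : Fin (m * n)) :
    (fun p => (Pi.single c 1 : Fin (m * n) → ℂ) (lexF p)) = Pi.single (unlexF c) 1 := by
  ext p
  simp only [Pi.single_apply, lexF_eq_finProdFinEquiv, ← Equiv.eq_symm_apply]
  rfl

theorem antilinear_eq_mulVec_star {ι κ : Type*} [Fintype ι] [DecidableEq ι]
    (J : (ι → ℂ) → (κ → ℂ)) (hadd : ∀ v w, J (v + w) = J v + J w)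
    (hsmul : ∀ (c : ℂ) v, J (c • v) = conj c • J v) (v : ι → ℂ) :
    J v = (Matrix.of fun p k => J (Pi.single k 1) p).mulVec (star v) := by
  let J' : (ι → ℂ) →ₗ⋆[ℂ] (κ → ℂ) := ⟨⟨J, hadd⟩, hsmul⟩
  have : J v = J' (∑ k, v k • Pi.single k 1) := by rw [← pi_eq_sum_univ']; rfl
  ext p
  simp [this, map_sum, J', Matrix.mulVec, dotProduct, mul_comm]

theorem det_ne_zero_of_antilinear_injective {ι : Type*} [Fintype ι] [DecidableEq ι]
    (J : (ι → ℂ) → (ι → ℂ)) (hadd : ∀ v w, J (v + w) = J v + J w)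
    (hsmul : ∀ (c : ℂ) v, J (c • v) = conj c • J v) (hJ : Function.Injective J) :
    (Matrix.of fun p k => J (Pi.single k 1) p).det ≠ 0 := by
  intro hdet
  obtain ⟨w, hw0, hw⟩ := Matrix.exists_mulVec_eq_zero_iff.mpr hdet
  have : J (star w) = J 0 := by
    rw [antilinear_eq_mulVec_star J hadd hsmul, antilinear_eq_mulVec_star J hadd hsmul, star_star,
      hw, star_zero, Matrix.mulVec_zero]
  exact hw0 (star_eq_zero.mp (hJ this))

theorem tensA_single {a b c d : Type*} [Fintype a] [DecidableEq a] [Fintype c] [DecidableEq c]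
    (A : (a → ℂ) → (b → ℂ)) (B : (c → ℂ) → (d → ℂ)) (x : a × c) (p : b × d) :
    tensA A B (Pi.single x 1) p = A (Pi.single x.1 1) p.1 * B (Pi.single x.2 1) p.2 := by
  simp [tensA, Pi.single_apply, Prod.ext_iff, ite_and, apply_ite (starRingEnd ℂ)]

section

variable {K : Type*} [Field K]

/-- Entrywise form of `J₂ × J₃ = J₃ × J₂` in the lexicographic basis of `ℂ⁶`, for `a` and `b`
the matrices of `J₂` and `J₃`. -/
def FlipCommute (a : Matrix (Fin 2) (Fin 2) K) (b : Matrix (Fin 3) (Fin 3) K) : Prop :=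
  ∀ u c : Fin 6,
    a (unlexF (m := 3) (n := 2) u).2 (unlexF (m := 2) (n := 3) c).1 *
        b (unlexF (m := 3) (n := 2) u).1 (unlexF (m := 2) (n := 3) c).2 =
      b (unlexF (m := 2) (n := 3) u).2 (unlexF (m := 3) (n := 2) c).1 *
        a (unlexF (m := 2) (n := 3) u).1 (unlexF (m := 3) (n := 2) c).2

namespace FlipCommute

variable {a : Matrix (Fin 2) (Fin 2) K} {b : Matrix (Fin 3) (Fin 3) K}

theorem row_zero_of_entry_eq_zero (h : FlipCommute a b) (ha : a.det ≠ 0)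
    (ha0 : a 0 0 = 0 ∨ a 0 1 = 0) : ∀ j, b 0 j = 0 := by
  rw [Matrix.det_fin_two] at ha
  have h01 : a 0 0 * b 0 1 = b 0 0 * a 0 1 := h 0 1
  have h02 : a 0 0 * b 0 2 = b 0 1 * a 0 0 := h 0 2
  have h03 : a 0 1 * b 0 0 = b 0 1 * a 0 1 := h 0 3
  have h12 : a 1 0 * b 0 2 = b 1 1 * a 0 0 := h 1 2
  have h13 : a 1 1 * b 0 0 = b 1 1 * a 0 1 := h 1 3
  rcases ha0 with ha00 | ha01
  · have ha01 : a 0 1 ≠ 0 := by rintro h; simp [ha00, h] at ha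
    have ha10 : a 1 0 ≠ 0 := by rintro h; simp [ha00, h] at ha
    have hb00 : b 0 0 = 0 := mul_right_cancel₀ ha01 (by linear_combination -h01 + b 0 1 * ha00)
    have hb01 : b 0 1 = 0 := mul_right_cancel₀ ha01 (by linear_combination -h03 + a 0 1 * hb00)
    have hb02 : b 0 2 = 0 := mul_left_cancel₀ ha10 (by linear_combination h12 + b 1 1 * ha00)
    intro j; fin_cases j <;> assumption
  · have ha00 : a 0 0 ≠ 0 := by rintro h; simp [ha01, h] at ha
    have ha11 : a 1 1 ≠ 0 := by rintro h; simp [ha01, h] at ha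
    have hb01 : b 0 1 = 0 := mul_left_cancel₀ ha00 (by linear_combination h01 + b 0 0 * ha01)
    have hb02 : b 0 2 = 0 := mul_left_cancel₀ ha00 (by linear_combination h02 + a 0 0 * hb01)
    have hb00 : b 0 0 = 0 := mul_left_cancel₀ ha11 (by linear_combination h13 + b 1 1 * ha01)
    intro j; fin_cases j <;> assumption

theorem row_zero_or_rows_eq (h : FlipCommute a b) (ha00 : a 0 0 ≠ 0) (ha01 : a 0 1 ≠ 0) :
    (∀ j, b 0 j = 0) ∨ b 1 = b 2 := by
  have h01 : a 0 0 * b 0 1 = b 0 0 * a 0 1 := h 0 1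
  have h02 : a 0 0 * b 0 2 = b 0 1 * a 0 0 := h 0 2
  have h03 : a 0 1 * b 0 0 = b 0 1 * a 0 1 := h 0 3
  have hb00 : b 0 0 = b 0 1 := mul_left_cancel₀ ha01 (by linear_combination h03)
  have hb02 : b 0 2 = b 0 1 := mul_left_cancel₀ ha00 (by linear_combination h02)
  by_cases hb01 : b 0 1 = 0
  · exact Or.inl fun j => by fin_cases j <;> simp [hb00, hb01, hb02]
  have hα : a 0 0 = a 0 1 := mul_right_cancel₀ hb01 (by linear_combination h01 + a 0 1 * hb00)
  have h10 : a 1 0 * b 0 0 = b 1 0 * a 0 0 := h 1 0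
  have h12 : a 1 0 * b 0 2 = b 1 1 * a 0 0 := h 1 2
  have h13 : a 1 1 * b 0 0 = b 1 1 * a 0 1 := h 1 3
  have h14 : a 1 1 * b 0 1 = b 1 2 * a 0 0 := h 1 4
  have h30 : a 1 0 * b 1 0 = b 0 0 * a 1 0 := h 3 0
  have h31 : a 1 0 * b 1 1 = b 0 0 * a 1 1 := h 3 1
  have h32 : a 1 0 * b 1 2 = b 0 1 * a 1 0 := h 3 2
  have h33 : a 1 1 * b 1 0 = b 0 1 * a 1 1 := h 3 3
  have h40 : a 0 0 * b 2 0 = b 1 0 * a 1 0 := h 4 0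
  have h41 : a 0 0 * b 2 1 = b 1 0 * a 1 1 := h 4 1
  have h42 : a 0 0 * b 2 2 = b 1 1 * a 1 0 := h 4 2
  have h44 : a 0 1 * b 2 1 = b 1 2 * a 1 0 := h 4 4
  have hc0 : b 1 0 = b 2 0 := mul_left_cancel₀ ha00 (by linear_combination -h40 - h30 - h10)
  have hc1 : b 1 1 = b 2 1 := mul_left_cancel₀ ha00
    (by linear_combination -h12 + a 1 0 * hb02 - h32 - h44 - b 2 1 * hα)
  have hc2 : b 1 2 = b 2 2 := mul_left_cancel₀ ha00
    (by linear_combination -h14 - h33 - h41 - a 0 0 * hc1 - h42 - h31 - h13 + b 1 1 * hα)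
  exact Or.inr (funext fun j => by fin_cases j <;> assumption)

theorem det_eq_zero (h : FlipCommute a b) (ha : a.det ≠ 0) : b.det = 0 := by
  have hb : (∀ j, b 0 j = 0) ∨ b 1 = b 2 := by
    by_cases ha0 : a 0 0 = 0 ∨ a 0 1 = 0
    · exact Or.inl (h.row_zero_of_entry_eq_zero ha ha0)
    · obtain ⟨ha00, ha01⟩ := not_or.mp ha0
      exact h.row_zero_or_rows_eq ha00 ha01
  rcases hb with h0 | h12
  · exact Matrix.det_eq_zero_of_row_eq_zero 0 h0
  · exact Matrix.det_zero_of_row_eq (by decide) h12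

end FlipCommute

end

theorem Jrev_add (m : ℕ) (v w : Fin m → ℂ) : Jrev m (v + w) = Jrev m v + Jrev m w := by
  ext i; simp [Jrev]

theorem Jrev_smul (m : ℕ) (c : ℂ) (v : Fin m → ℂ) : Jrev m (c • v) = conj c • Jrev m v := by
  ext i; simp [Jrev]

theorem Jrev_Jrev (m : ℕ) (v : Fin m → ℂ) : Jrev m (Jrev m v) = v := by
  ext i; simp [Jrev]

theorem sum_conj_Jrev_mul_Jrev (m : ℕ) (v w : Fin m → ℂ) :
    ∑ i, conj (Jrev m v i) * Jrev m w i = ∑ i, conj (w i) * v i := by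
  rw [← Equiv.sum_comp Fin.revPerm (fun i => conj (w i) * v i)]
  simp [Jrev, mul_comm]

theorem tensA_Jrev {m n : ℕ} (w : Fin m × Fin n → ℂ) (p : Fin m × Fin n) :
    tensA (Jrev m) (Jrev n) w p = conj (w (p.1.rev, p.2.rev)) := by
  simp [tensA, Jrev, Pi.single_apply, apply_ite (starRingEnd ℂ)]

theorem tensA_Jrev_lexF {m n : ℕ} (v : Fin (m * n) → ℂ) (u : Fin (m * n)) :
    tensA (Jrev m) (Jrev n) (fun p => v (lexF p)) (unlexF u) = Jrev (m * n) v u := by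
  rw [tensA_Jrev, lexF_rev, lexF_unlexF]
  rfl

/-- (a) There is no family `J_n` of antiunitaries on `ℂ^n` for which the flipped
tensor products (transported to `ℂ⁶` via the lexicographic identifications) satisfy
the strict conjugation requirement `J₂ × J₃ = J₃ × J₂` as operators on `ℂ⁶`.
(b) Nevertheless, `J_m e_i := e_{m+1-i}` defines antiunitary involutions which, for
the *ordinary* antilinear tensor product (without flip) under the lexicographic
identification `ℂ^m ⊗ ℂ^n ≅ ℂ^{mn}`, satisfy `J_m ⊗ J_n = J_{mn} = J_n ⊗ J_m`. -/
theorem no_strict_flip_conjugation_but_reversal_works :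
    -- (a): no such family of antiunitaries
    (¬ ∃ J : (n : ℕ) → (Fin n → ℂ) → (Fin n → ℂ),
      (∀ n, ∀ v w : Fin n → ℂ, J n (v + w) = J n v + J n w) ∧
      (∀ n (c : ℂ) (v : Fin n → ℂ), J n (c • v) = conj c • J n v) ∧
      (∀ n, Function.Bijective (J n)) ∧
      (∀ n, ∀ v w : Fin n → ℂ,
        ∑ i, conj (J n v i) * J n w i = ∑ i, conj (w i) * v i) ∧
      -- `J₂ × J₃ = J₃ × J₂` on `ℂ⁶`, via the lexicographic identifications
      (∀ (v : Fin 6 → ℂ) (u : Fin 6),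
        tensAflip (J 2) (J 3) (fun p => v (lexF p)) (unlexF (m := 3) (n := 2) u) =
        tensAflip (J 3) (J 2) (fun p => v (lexF p)) (unlexF (m := 2) (n := 3) u))) ∧
    -- (b): the reversal antiunitaries
    (∀ m : ℕ,
      (∀ v w : Fin m → ℂ, Jrev m (v + w) = Jrev m v + Jrev m w) ∧
      (∀ (c : ℂ) (v : Fin m → ℂ), Jrev m (c • v) = conj c • Jrev m v) ∧
      (∀ v, Jrev m (Jrev m v) = v) ∧
      (∀ v w : Fin m → ℂ,
        ∑ i, conj (Jrev m v i) * Jrev m w i = ∑ i, conj (w i) * v i)) ∧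
    (∀ m n : ℕ, ∀ (v : Fin (m * n) → ℂ) (u : Fin (m * n)),
      tensA (Jrev m) (Jrev n) (fun p => v (lexF p)) (unlexF u) = Jrev (m * n) v u ∧
      tensA (Jrev n) (Jrev m) (fun p => v (Fin.cast (Nat.mul_comm n m) (lexF p)))
          (unlexF (Fin.cast (Nat.mul_comm m n) u)) = Jrev (m * n) v u) := by
  refine ⟨?_, fun m => ⟨Jrev_add m, Jrev_smul m, Jrev_Jrev m, sum_conj_Jrev_mul_Jrev m⟩,
    fun m n v u => ⟨tensA_Jrev_lexF v u, ?_⟩⟩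
  · rintro ⟨J, hadd, hsmul, hbij, -, hcomm⟩
    have hdet (n : ℕ) : (Matrix.of fun p k => J n (Pi.single k 1) p).det ≠ 0 :=
      det_ne_zero_of_antilinear_injective (J n) (hadd n) (hsmul n) (hbij n).1
    have hflip : FlipCommute (Matrix.of fun p k => J 2 (Pi.single k 1) p)
        (Matrix.of fun p k => J 3 (Pi.single k 1) p) := by
      intro u c
      simpa [tensAflip, single_comp_lexF, tensA_single] using hcomm (Pi.single c 1) u
    exact hdet 3 (hflip.det_eq_zero (hdet 2))
  · refine (tensA_Jrev_lexF (fun x => v (Fin.cast (Nat.mul_comm n m) x)) _).trans ?_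
    simp [Jrev, ← Fin.cast_rev]
end

section
/- Let s and f = s' be an Hermitian pair of semilinear maps between dense subspaces of Hilbert spaces (so f ⊆ s*), and suppose s's and ff' form an essentially self-adjoint pair. Then the closure of s̄' ∘ s̄ equals the closure of s's, where s̄, s̄' denote the closures of s, s'. -/
/-!
Every element of the graph of `t̄ ∘ s̄` already lies in the graph of `(t ∘ s)*`: the identity
`⟪t k, h⟫ = ⟪k, s h⟫` cuts out a closed set of pairs of graph points, so it persists for the
closures `s̄, t̄`, and that is exactly what pairing an element of `t̄ ∘ s̄` with one of `t ∘ s`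
requires. Since `(t ∘ s)*` is closed and equal to the closure of `t ∘ s`, while
`t ∘ s ⊆ t̄ ∘ s̄` trivially, the two closures coincide.
-/

open scoped InnerProductSpace

/-- The graph of the composite `t ∘ s` of two partially defined operators
`s : D(s) ⊆ H → K` and `t : D(t) ⊆ K → H`, as a set of pairs. -/
def compGraph {H K : Type*}
    [NormedAddCommGroup H] [InnerProductSpace ℂ H]
    [NormedAddCommGroup K] [InnerProductSpace ℂ K]
    (s : H →ₗ.[ℂ] K) (t : K →ₗ.[ℂ] H) : Set (H × H) :=
  {p : H × H | ∃ k : K, (p.1, k) ∈ s.graph ∧ (k, p.2) ∈ t.graph}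

namespace LinearPMap

variable {R E F : Type*} [CommRing R] [AddCommGroup E] [AddCommGroup F] [Module R E] [Module R F]
  [TopologicalSpace E] [TopologicalSpace F] [ContinuousAdd E] [ContinuousAdd F]
  [TopologicalSpace R] [ContinuousSMul R E] [ContinuousSMul R F]

theorem graph_closure_subset_closure_graph (f : E →ₗ.[R] F) :
    (f.closure.graph : Set (E × F)) ⊆ _root_.closure (f.graph : Set (E × F)) := by
  by_cases hf : f.IsClosable
  · rw [← hf.graph_closure_eq_closure_graph, Submodule.topologicalClosure_coe]
  · rw [closure_def' hf]
    exact subset_closure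

end LinearPMap

section HermitianPair

variable {𝕜 H K : Type*} [RCLike 𝕜]
  [NormedAddCommGroup H] [InnerProductSpace 𝕜 H] [NormedAddCommGroup K] [InnerProductSpace 𝕜 K]

theorem inner_eq_of_mem_graph_closure {s : H →ₗ.[𝕜] K} {t : K →ₗ.[𝕜] H}
    (hherm : ∀ (h : s.domain) (k : t.domain), ⟪t k, (h : H)⟫_𝕜 = ⟪(k : K), s h⟫_𝕜)
    {p : H × K} (hp : p ∈ s.closure.graph) {q : K × H} (hq : q ∈ t.closure.graph) :
    ⟪q.2, p.1⟫_𝕜 = ⟪q.1, p.2⟫_𝕜 := by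
  have hgraph : (s.graph : Set (H × K)) ×ˢ (t.graph : Set (K × H)) ⊆
      {pq | ⟪pq.2.2, pq.1.1⟫_𝕜 = ⟪pq.2.1, pq.1.2⟫_𝕜} := by
    rintro ⟨⟨_, _⟩, ⟨_, _⟩⟩ ⟨hp, hq⟩
    obtain ⟨x, rfl, rfl⟩ := (s.mem_graph_iff).1 hp
    obtain ⟨y, rfl, rfl⟩ := (t.mem_graph_iff).1 hq
    exact hherm x y
  have hclosed : IsClosed {pq : (H × K) × (K × H) | ⟪pq.2.2, pq.1.1⟫_𝕜 = ⟪pq.2.1, pq.1.2⟫_𝕜} :=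
    isClosed_eq (by fun_prop) (by fun_prop)
  have hpq : (p, q) ∈ closure ((s.graph : Set (H × K)) ×ˢ (t.graph : Set (K × H))) := by
    rw [closure_prod_eq]
    exact ⟨s.graph_closure_subset_closure_graph hp, t.graph_closure_subset_closure_graph hq⟩
  exact closure_minimal hgraph hclosed hpq

end HermitianPair

section CompGraph

variable {H K : Type*} [NormedAddCommGroup H] [InnerProductSpace ℂ H]
  [NormedAddCommGroup K] [InnerProductSpace ℂ K]

theorem compGraph_mono {s s' : H →ₗ.[ℂ] K} {t t' : K →ₗ.[ℂ] H} (hs : s ≤ s') (ht : t ≤ t') :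
    compGraph s t ⊆ compGraph s' t' :=
  fun _ ⟨k, hsk, htk⟩ => ⟨k, LinearPMap.le_graph_of_le hs hsk, LinearPMap.le_graph_of_le ht htk⟩

theorem compGraph_closure_subset_adjoint {s : H →ₗ.[ℂ] K} {t : K →ₗ.[ℂ] H}
    (hherm : ∀ (h : s.domain) (k : t.domain), ⟪t k, (h : H)⟫_ℂ = ⟪(k : K), s h⟫_ℂ) :
    compGraph s.closure t.closure ⊆
      {q : H × H | ∀ p ∈ compGraph s t, ⟪q.1, p.2⟫_ℂ = ⟪q.2, p.1⟫_ℂ} := by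
  rintro ⟨h, h'⟩ ⟨k, hsk, htk⟩ ⟨x, z⟩ ⟨m, hsm, htm⟩
  have hz : ⟪z, h⟫_ℂ = ⟪m, k⟫_ℂ :=
    inner_eq_of_mem_graph_closure hherm hsk (LinearPMap.le_graph_of_le t.le_closure htm)
  have hh' : ⟪h', x⟫_ℂ = ⟪k, m⟫_ℂ :=
    inner_eq_of_mem_graph_closure hherm (LinearPMap.le_graph_of_le s.le_closure hsm) htk
  calc ⟪h, z⟫_ℂ = ⟪k, m⟫_ℂ := by rw [← inner_conj_symm, hz, inner_conj_symm]
    _ = ⟪h', x⟫_ℂ := hh'.symm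

end CompGraph

theorem closure_of_composite_of_hermitian_pair_general
    {H K : Type*}
    [NormedAddCommGroup H] [InnerProductSpace ℂ H]
    [NormedAddCommGroup K] [InnerProductSpace ℂ K]
    (s : H →ₗ.[ℂ] K) (t : K →ₗ.[ℂ] H)
    -- the Hermitian pair condition: `t = s' ⊆ s*`
    (hherm : ∀ (h : s.domain) (k : t.domain), ⟪t k, (h : H)⟫_ℂ = ⟪(k : K), s h⟫_ℂ)
    -- essential self-adjointness of the pair `(s's, ff')`: `(t∘s)* = closure (t∘s)`
    (hess : {q : H × H | ∀ p ∈ compGraph s t, ⟪q.1, p.2⟫_ℂ = ⟪q.2, p.1⟫_ℂ} =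
      closure (compGraph s t)) :
    closure (compGraph s.closure t.closure) = closure (compGraph s t) :=
  subset_antisymm
    (closure_minimal ((compGraph_closure_subset_adjoint hherm).trans hess.le) isClosed_closure)
    (closure_mono (compGraph_mono s.le_closure t.le_closure))

/-- Let `s` and `f = s' = t` be an Hermitian pair of densely defined maps between
dense subspaces of Hilbert spaces (so `f ⊆ s*`), and suppose the pair
`(s's, ff') = (t∘s, t∘s)` is essentially self-adjoint, i.e. the adjoint of `t∘s`
equals its closure.  Then the closure of `t̄ ∘ s̄` (composite of the closures)
equals the closure of `t ∘ s`. -/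
theorem closure_of_composite_of_hermitian_pair
    {H K : Type*}
    [NormedAddCommGroup H] [InnerProductSpace ℂ H] [CompleteSpace H]
    [NormedAddCommGroup K] [InnerProductSpace ℂ K] [CompleteSpace K]
    (s : H →ₗ.[ℂ] K) (t : K →ₗ.[ℂ] H)
    (hs_dom : Dense (s.domain : Set H))
    (ht_dom : Dense (t.domain : Set K))
    (hs_closable : s.IsClosable) (ht_closable : t.IsClosable)
    -- the Hermitian pair condition: `t = s' ⊆ s*`
    (hherm : ∀ (h : s.domain) (k : t.domain), ⟪t k, (h : H)⟫_ℂ = ⟪(k : K), s h⟫_ℂ)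
    -- essential self-adjointness of the pair `(s's, ff')`: `(t∘s)* = closure (t∘s)`
    (hess : {q : H × H | ∀ p ∈ compGraph s t, ⟪q.1, p.2⟫_ℂ = ⟪q.2, p.1⟫_ℂ} =
      closure (compGraph s t)) :
    closure (compGraph s.closure t.closure) = closure (compGraph s t) :=
  closure_of_composite_of_hermitian_pair_general s t hherm hess
end

section
/- Let V be a multiplicative unitary on K ⊗ K and suppose U is a unitary on K such that V̂ := (1 ⊗ U) ϑ V ϑ (1 ⊗ U*) is multiplicative and [V̂₁₂, V₂₃] = 0. Then for every corepresentation W of V on H, the unitary η_W := (1_H ⊗ U) ϑ_{K,H} W ϑ_{H,K} (1_H ⊗ U*) on H ⊗ K satisfies η_W ∈ (W × V, ι(W) × V), i.e. η_W intertwines the corepresentation W × V with the corepresentation ι(W) × V, where ι(W) is the trivial corepresentation on H. -/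
open scoped Matrix Kronecker

noncomputable def leg12 {α β γ : Type*} [DecidableEq γ]
    (X : Matrix (α × β) (α × β) ℂ) : Matrix (α × β × γ) (α × β × γ) ℂ :=
  fun p q => X (p.1, p.2.1) (q.1, q.2.1) * (if p.2.2 = q.2.2 then 1 else 0)

noncomputable def leg13 {α β γ : Type*} [DecidableEq β]
    (X : Matrix (α × γ) (α × γ) ℂ) : Matrix (α × β × γ) (α × β × γ) ℂ :=
  fun p q => X (p.1, p.2.2) (q.1, q.2.2) * (if p.2.1 = q.2.1 then 1 else 0)

noncomputable def leg23 {α β γ : Type*} [DecidableEq α]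
    (X : Matrix (β × γ) (β × γ) ℂ) : Matrix (α × β × γ) (α × β × γ) ℂ :=
  fun p q => X (p.2.1, p.2.2) (q.2.1, q.2.2) * (if p.1 = q.1 then 1 else 0)

/-- `1 ⊗ T` (identity on the first leg). -/
noncomputable def idTens {a b c : Type*} [DecidableEq a]
    (T : Matrix b c ℂ) : Matrix (a × b) (a × c) ℂ :=
  fun p q => (if p.1 = q.1 then 1 else 0) * T p.2 q.2


set_option linter.unusedSectionVars false
set_option maxHeartbeats 1600000

section MulHelpers
variable {M : Type*} [Monoid M]

lemma mswap' {x y y' x' : M} (h : x * y = y' * x') (t : M) :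
    x * (y * t) = y' * (x' * t) := by
  rw [← mul_assoc, h, mul_assoc]

lemma mcancel {x y : M} (h : x * y = 1) (t : M) : x * (y * t) = t := by
  rw [← mul_assoc, h, one_mul]

lemma mswap3 {x y z z' x' : M} (h : x * (y * z) = z' * x') (t : M) :
    x * (y * (z * t)) = z' * (x' * t) := by
  have h2 : x * (y * z) * t = z' * x' * t := by rw [h]
  simpa only [mul_assoc] using h2

end MulHelpers

section Aux
variable {α β γ : Type*} [Fintype α] [Fintype β] [Fintype γ]
  [DecidableEq α] [DecidableEq β] [DecidableEq γ]

lemma leg12_mul (X Y : Matrix (α × β) (α × β) ℂ) :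
    leg12 (γ := γ) X * leg12 Y = leg12 (X * Y) := by
  ext p q
  simp only [leg12, Matrix.mul_apply, Fintype.sum_prod_type, mul_ite, ite_mul,
    mul_zero, zero_mul, mul_one, one_mul, Finset.sum_ite_eq, Finset.sum_ite_irrel,
    Finset.sum_const_zero, Finset.mem_univ, if_true, Finset.sum_ite_eq']

lemma leg13_mul (X Y : Matrix (α × γ) (α × γ) ℂ) :
    leg13 (β := β) X * leg13 Y = leg13 (X * Y) := by
  ext p q
  simp only [leg13, Matrix.mul_apply, Fintype.sum_prod_type, mul_ite, ite_mul,
    mul_zero, zero_mul, mul_one, one_mul, Finset.sum_ite_eq, Finset.sum_ite_irrel,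
    Finset.sum_const_zero, Finset.mem_univ, if_true, Finset.sum_ite_eq']

lemma leg23_mul (X Y : Matrix (β × γ) (β × γ) ℂ) :
    leg23 (α := α) X * leg23 Y = leg23 (X * Y) := by
  ext p q
  simp only [leg23, Matrix.mul_apply, Fintype.sum_prod_type, mul_ite, ite_mul,
    mul_zero, zero_mul, mul_one, one_mul, Finset.sum_ite_eq, Finset.sum_ite_irrel,
    Finset.sum_const_zero, Finset.mem_univ, if_true, Finset.sum_ite_eq']

lemma idTens_mul {b c d : Type*} [Fintype c] [DecidableEq c]
    (T : Matrix b c ℂ) (S : Matrix c d ℂ) :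
    idTens (a := α) T * idTens (a := α) S = idTens (T * S) := by
  ext p q
  simp only [idTens, Matrix.mul_apply, Fintype.sum_prod_type, mul_ite, ite_mul,
    mul_zero, zero_mul, mul_one, one_mul, Finset.sum_ite_eq, Finset.sum_ite_irrel,
    Finset.sum_const_zero, Finset.mem_univ, if_true, Finset.sum_ite_eq']

lemma leg12_one : leg12 (α := α) (β := β) (γ := γ) 1 = 1 := by
  ext p q
  simp only [leg12, Matrix.one_apply, Prod.ext_iff, ite_and, mul_ite, ite_mul,
    mul_one, one_mul, mul_zero, zero_mul]
  rcases p with ⟨a, b, c⟩; rcases q with ⟨d, e, f⟩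
  by_cases h1 : a = d <;> by_cases h2 : b = e <;> by_cases h3 : c = f <;>
    simp [h1, h2, h3]

lemma leg13_one : leg13 (α := α) (β := β) (γ := γ) 1 = 1 := by
  ext p q
  simp only [leg13, Matrix.one_apply, Prod.ext_iff, ite_and, mul_ite, ite_mul,
    mul_one, one_mul, mul_zero, zero_mul]
  rcases p with ⟨a, b, c⟩; rcases q with ⟨d, e, f⟩
  by_cases h1 : a = d <;> by_cases h2 : b = e <;> by_cases h3 : c = f <;>
    simp [h1, h2, h3]

lemma leg23_one : leg23 (α := α) (β := β) (γ := γ) 1 = 1 := by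
  ext p q
  simp only [leg23, Matrix.one_apply, Prod.ext_iff, ite_and, mul_ite, ite_mul,
    mul_one, one_mul, mul_zero, zero_mul]

lemma idTens_inj {b : Type*} [Nonempty α] (T S : Matrix b b ℂ)
    (h : idTens (a := α) T = idTens S) : T = S := by
  obtain ⟨a⟩ := ‹Nonempty α›
  ext p q
  have := congrFun (congrFun h (a, p)) (a, q)
  simpa [idTens] using this

lemma comm_u3_leg12 (u : Matrix γ γ ℂ) (X : Matrix (α × β) (α × β) ℂ) :
    leg23 (α := α) ((1 : Matrix β β ℂ) ⊗ₖ u) * leg12 X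
      = leg12 X * leg23 ((1 : Matrix β β ℂ) ⊗ₖ u) := by
  ext p q
  simp only [leg23, leg12, Matrix.mul_apply, Matrix.kroneckerMap_apply,
    Matrix.one_apply, Fintype.sum_prod_type, mul_ite, ite_mul,
    mul_zero, zero_mul, mul_one, one_mul, Finset.sum_ite_eq, Finset.sum_ite_irrel,
    Finset.sum_const_zero, Finset.mem_univ, if_true, Finset.sum_ite_eq']
  ring

lemma comm_u2_leg13 (u : Matrix β β ℂ) (Y : Matrix (α × γ) (α × γ) ℂ) :
    leg12 (γ := γ) ((1 : Matrix α α ℂ) ⊗ₖ u) * leg13 Y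
      = leg13 Y * leg12 ((1 : Matrix α α ℂ) ⊗ₖ u) := by
  ext p q
  simp only [leg12, leg13, Matrix.mul_apply, Matrix.kroneckerMap_apply,
    Matrix.one_apply, Fintype.sum_prod_type, mul_ite, ite_mul,
    mul_zero, zero_mul, mul_one, one_mul, Finset.sum_ite_eq, Finset.sum_ite_irrel,
    Finset.sum_const_zero, Finset.mem_univ, if_true, Finset.sum_ite_eq']
  ring

lemma leg23_oneKron (u : Matrix γ γ ℂ) :
    leg23 (α := α) ((1 : Matrix β β ℂ) ⊗ₖ u)
      = leg13 ((1 : Matrix α α ℂ) ⊗ₖ u) := by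
  ext p q
  simp only [leg23, leg13, Matrix.kroneckerMap_apply, Matrix.one_apply,
    mul_ite, ite_mul, mul_zero, zero_mul, mul_one, one_mul]
  by_cases h1 : p.1 = q.1 <;> by_cases h2 : p.2.1 = q.2.1 <;> simp [h1, h2]

lemma leg12_oneKron (u : Matrix β β ℂ) :
    leg12 (γ := γ) ((1 : Matrix α α ℂ) ⊗ₖ u)
      = leg23 (u ⊗ₖ (1 : Matrix γ γ ℂ)) := by
  ext p q
  simp only [leg12, leg23, Matrix.kroneckerMap_apply, Matrix.one_apply,
    mul_ite, ite_mul, mul_zero, zero_mul, mul_one, one_mul]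
  by_cases h1 : p.1 = q.1 <;> by_cases h2 : p.2.2 = q.2.2 <;> simp [h1, h2]

lemma idTens_eq_leg23 (T : Matrix (β × γ) (β × γ) ℂ) :
    idTens (a := α) T = leg23 T := by
  ext p q
  simp only [idTens, leg23]
  ring

/-- relabeling `(1,2,3) ↦ (3,1,2)`: sends the triple `β×γ×α` to `α×β×γ`. -/
def cycA : (β × γ × α) ≃ (α × β × γ) :=
  ⟨fun p => (p.2.2, p.1, p.2.1), fun p => (p.2.1, p.2.2, p.1),
   fun _ => rfl, fun _ => rfl⟩

def cycB : (γ × α × β) ≃ (α × β × γ) :=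
  ⟨fun p => (p.2.1, p.2.2, p.1), fun p => (p.2.2, p.1, p.2.1),
   fun _ => rfl, fun _ => rfl⟩

lemma TA1 (X : Matrix (α × β) (α × β) ℂ) :
    (leg12 (γ := γ) X).submatrix cycA cycA
      = leg13 (X.submatrix Prod.swap Prod.swap) := rfl

lemma TA2 (Y : Matrix (α × γ) (α × γ) ℂ) :
    (leg13 (β := β) Y).submatrix cycA cycA
      = leg23 (Y.submatrix Prod.swap Prod.swap) := rfl

lemma TA3 (Z : Matrix (β × γ) (β × γ) ℂ) :
    (leg23 (α := α) Z).submatrix cycA cycA = leg12 Z := rfl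

lemma TB1 (X : Matrix (α × β) (α × β) ℂ) :
    (leg12 (γ := γ) X).submatrix cycB cycB = leg23 X := rfl

lemma TB2 (Y : Matrix (α × γ) (α × γ) ℂ) :
    (leg13 (β := β) Y).submatrix cycB cycB
      = leg12 (Y.submatrix Prod.swap Prod.swap) := rfl

lemma TB3 (Z : Matrix (β × γ) (β × γ) ℂ) :
    (leg23 (α := α) Z).submatrix cycB cycB
      = leg13 (Z.submatrix Prod.swap Prod.swap) := rfl

lemma psub_mul (A B : Matrix (α × β) (α × β) ℂ) :
    A.submatrix Prod.swap Prod.swap * B.submatrix Prod.swap Prod.swap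
      = (A * B).submatrix Prod.swap Prod.swap := by
  have := Matrix.submatrix_mul_equiv A B Prod.swap (Equiv.prodComm β α) Prod.swap
  simpa [Equiv.coe_prodComm] using this

lemma psub_one : ((1 : Matrix (α × β) (α × β) ℂ)).submatrix Prod.swap Prod.swap = 1 := by
  have := Matrix.submatrix_one_equiv (α := ℂ) (Equiv.prodComm β α)
  simpa [Equiv.coe_prodComm] using this

lemma psub_psub (A : Matrix (α × β) (α × β) ℂ) :
    (A.submatrix Prod.swap Prod.swap).submatrix Prod.swap Prod.swap = A := rfl

lemma psub_kron1 (u : Matrix β β ℂ) :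
    (((1 : Matrix α α ℂ) ⊗ₖ u)).submatrix Prod.swap Prod.swap
      = u ⊗ₖ (1 : Matrix α α ℂ) := by
  ext p q
  simp only [Matrix.submatrix_apply, Matrix.kroneckerMap_apply, Matrix.one_apply,
    Prod.snd_swap, Prod.fst_swap, mul_ite, ite_mul, mul_one, one_mul, mul_zero, zero_mul]

lemma transport3 {S T : Type*} [Fintype S] [Fintype T] [DecidableEq S] [DecidableEq T]
    (e : T ≃ S) {A B C D E : Matrix S S ℂ} (hid : A * B * C = D * E) :
    A.submatrix e e * B.submatrix e e * C.submatrix e e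
      = D.submatrix e e * E.submatrix e e := by
  rw [Matrix.submatrix_mul_equiv, Matrix.submatrix_mul_equiv, Matrix.submatrix_mul_equiv, hid]

end Aux

section FourLeg
variable {k m : Type*} [Fintype k] [Fintype m] [DecidableEq k] [DecidableEq m]

/-- legs `(1,0,2)` then rest leg `3`, on `T4 = k×k×m×k` with legs `0,1,2,3`. -/
def tauE : (k × k × m × k) ≃ ((k × k × m) × k) :=
  ⟨fun p => ((p.2.1, p.1, p.2.2.1), p.2.2.2),
   fun x => (x.1.2.1, x.1.1, x.1.2.2, x.2), fun _ => rfl, fun _ => rfl⟩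

/-- legs `(3,0,2)` then rest leg `1`. -/
def tauE' : (k × k × m × k) ≃ ((k × k × m) × k) :=
  ⟨fun p => ((p.2.2.2, p.1, p.2.2.1), p.2.1),
   fun x => (x.1.2.1, x.2, x.1.2.2, x.1.1), fun _ => rfl, fun _ => rfl⟩

/-- legs `(1,0,3)` then rest leg `2`. -/
def tauS : (k × k × m × k) ≃ ((k × k × k) × m) :=
  ⟨fun p => ((p.2.1, p.1, p.2.2.2), p.2.2.1),
   fun x => (x.1.2.1, x.1.1, x.2, x.1.2.2), fun _ => rfl, fun _ => rfl⟩

/-- `Y` placed at legs `(1,0)` of `T4`. -/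
noncomputable def Q10 (Y : Matrix (k × k) (k × k) ℂ) :
    Matrix (k × k × m × k) (k × k × m × k) ℂ :=
  leg12 (Y.submatrix Prod.swap Prod.swap)

/-- `X` placed at legs `(0,2)` of `T4`. -/
noncomputable def Q02 (X : Matrix (k × m) (k × m) ℂ) :
    Matrix (k × k × m × k) (k × k × m × k) ℂ :=
  leg13 (leg12 X)

/-- `Y` placed at legs `(3,0)` of `T4`. -/
noncomputable def Q30 (Y : Matrix (k × k) (k × k) ℂ) :
    Matrix (k × k × m × k) (k × k × m × k) ℂ :=
  leg13 (leg13 (Y.submatrix Prod.swap Prod.swap))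

lemma identE1 (V : Matrix (k × k) (k × k) ℂ) :
    ((leg12 (γ := m) V) ⊗ₖ (1 : Matrix k k ℂ)).submatrix tauE tauE = Q10 (m := m) V := by
  ext p q
  simp only [Q10, Matrix.submatrix_apply, Matrix.kroneckerMap_apply, Matrix.one_apply,
    leg12, tauE, Equiv.coe_fn_mk, Matrix.submatrix_apply, Prod.ext_iff, ite_and,
    mul_ite, ite_mul, mul_one, one_mul, mul_zero, zero_mul]
  rcases p with ⟨a, b, c, d⟩; rcases q with ⟨a', b', c', d'⟩
  simp only [Prod.fst_swap, Prod.snd_swap]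
  by_cases h1 : c = c' <;> by_cases h2 : d = d' <;> simp [h1, h2]

lemma identE2 (W : Matrix (k × m) (k × m) ℂ) :
    ((leg13 (β := k) W) ⊗ₖ (1 : Matrix k k ℂ)).submatrix tauE tauE
      = idTens (a := k) (leg12 W) := by
  ext p q
  simp only [Matrix.submatrix_apply, Matrix.kroneckerMap_apply, Matrix.one_apply,
    leg13, leg12, idTens, tauE, Equiv.coe_fn_mk, Prod.ext_iff, ite_and,
    mul_ite, ite_mul, mul_one, one_mul, mul_zero, zero_mul]

lemma identE3 (W : Matrix (k × m) (k × m) ℂ) :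
    ((leg23 (α := k) W) ⊗ₖ (1 : Matrix k k ℂ)).submatrix tauE tauE = Q02 (m := m) W := by
  ext p q
  simp only [Q02, Matrix.submatrix_apply, Matrix.kroneckerMap_apply, Matrix.one_apply,
    leg23, leg13, leg12, tauE, Equiv.coe_fn_mk, Prod.ext_iff, ite_and,
    mul_ite, ite_mul, mul_one, one_mul, mul_zero, zero_mul]
  rcases p with ⟨a, b, c, d⟩; rcases q with ⟨a', b', c', d'⟩
  by_cases h1 : b = b' <;> by_cases h2 : d = d' <;> simp [h1, h2]

lemma identF1 (V : Matrix (k × k) (k × k) ℂ) :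
    ((leg12 (γ := m) V) ⊗ₖ (1 : Matrix k k ℂ)).submatrix tauE' tauE' = Q30 (m := m) V := by
  ext p q
  simp only [Q30, Matrix.submatrix_apply, Matrix.kroneckerMap_apply, Matrix.one_apply,
    leg12, leg13, tauE', Equiv.coe_fn_mk, Prod.ext_iff, ite_and,
    mul_ite, ite_mul, mul_one, one_mul, mul_zero, zero_mul]
  rcases p with ⟨a, b, c, d⟩; rcases q with ⟨a', b', c', d'⟩
  simp only [Prod.fst_swap, Prod.snd_swap]
  by_cases h1 : c = c' <;> by_cases h2 : b = b' <;> simp [h1, h2]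

lemma identF2 (W : Matrix (k × m) (k × m) ℂ) :
    ((leg13 (β := k) W) ⊗ₖ (1 : Matrix k k ℂ)).submatrix tauE' tauE'
      = idTens (a := k) (leg23 (W.submatrix Prod.swap Prod.swap)) := by
  ext p q
  simp only [Matrix.submatrix_apply, Matrix.kroneckerMap_apply, Matrix.one_apply,
    leg13, leg23, idTens, tauE', Equiv.coe_fn_mk, Prod.ext_iff, ite_and,
    mul_ite, ite_mul, mul_one, one_mul, mul_zero, zero_mul]
  rcases p with ⟨a, b, c, d⟩; rcases q with ⟨a', b', c', d'⟩
  simp only [Prod.fst_swap, Prod.snd_swap]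
  by_cases h1 : a = a' <;> by_cases h2 : b = b' <;> simp [h1, h2]

lemma identF3 (W : Matrix (k × m) (k × m) ℂ) :
    ((leg23 (α := k) W) ⊗ₖ (1 : Matrix k k ℂ)).submatrix tauE' tauE' = Q02 (m := m) W := by
  ext p q
  simp only [Q02, Matrix.submatrix_apply, Matrix.kroneckerMap_apply, Matrix.one_apply,
    leg23, leg13, leg12, tauE', Equiv.coe_fn_mk, Prod.ext_iff, ite_and,
    mul_ite, ite_mul, mul_one, one_mul, mul_zero, zero_mul]

lemma identS1 (V : Matrix (k × k) (k × k) ℂ) :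
    ((leg12 (γ := k) V) ⊗ₖ (1 : Matrix m m ℂ)).submatrix tauS tauS = Q10 (m := m) V := by
  ext p q
  simp only [Q10, Matrix.submatrix_apply, Matrix.kroneckerMap_apply, Matrix.one_apply,
    leg12, tauS, Equiv.coe_fn_mk, Prod.ext_iff, ite_and,
    mul_ite, ite_mul, mul_one, one_mul, mul_zero, zero_mul]
  rcases p with ⟨a, b, c, d⟩; rcases q with ⟨a', b', c', d'⟩
  simp only [Prod.fst_swap, Prod.snd_swap]
  by_cases h1 : d = d' <;> by_cases h2 : c = c' <;> simp [h1, h2]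

lemma identS2 (Z : Matrix (k × k) (k × k) ℂ) :
    ((leg13 (β := k) Z) ⊗ₖ (1 : Matrix m m ℂ)).submatrix tauS tauS
      = idTens (a := k) (leg13 (β := m) Z) := by
  ext p q
  simp only [Matrix.submatrix_apply, Matrix.kroneckerMap_apply, Matrix.one_apply,
    leg13, idTens, tauS, Equiv.coe_fn_mk, Prod.ext_iff, ite_and,
    mul_ite, ite_mul, mul_one, one_mul, mul_zero, zero_mul]

lemma identS3 (V : Matrix (k × k) (k × k) ℂ) :
    ((leg23 (α := k) (V.submatrix Prod.swap Prod.swap)) ⊗ₖ (1 : Matrix m m ℂ)).submatrix tauS tauS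
      = Q30 (m := m) V := by
  ext p q
  simp only [Q30, Matrix.submatrix_apply, Matrix.kroneckerMap_apply, Matrix.one_apply,
    leg23, leg13, tauS, Equiv.coe_fn_mk, Prod.ext_iff, ite_and,
    mul_ite, ite_mul, mul_one, one_mul, mul_zero, zero_mul]
  rcases p with ⟨a, b, c, d⟩; rcases q with ⟨a', b', c', d'⟩
  simp only [Prod.fst_swap, Prod.snd_swap]
  by_cases h1 : b = b' <;> by_cases h2 : c = c' <;> simp [h1, h2]

lemma commQ02_lift (X : Matrix (k × m) (k × m) ℂ) (Z : Matrix (k × k) (k × k) ℂ) :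
    Q02 (m := m) X * idTens (a := k) (leg13 (β := m) Z)
      = idTens (a := k) (leg13 (β := m) Z) * Q02 X := by
  ext p q
  simp only [Q02, idTens, leg12, leg13, Matrix.mul_apply, Fintype.sum_prod_type,
    mul_ite, ite_mul, mul_zero, zero_mul, mul_one, one_mul, Finset.sum_ite_eq,
    Finset.sum_ite_irrel, Finset.sum_const_zero, Finset.mem_univ, if_true,
    Finset.sum_ite_eq']
  ring

lemma transport3k {S : Type*} [Fintype S] [DecidableEq S] {δ T : Type*}
    [Fintype δ] [DecidableEq δ] [Fintype T] [DecidableEq T]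
    (e : T ≃ S × δ) {A B C D E : Matrix S S ℂ} (hid : A * B * C = D * E) :
    (A ⊗ₖ (1 : Matrix δ δ ℂ)).submatrix e e * (B ⊗ₖ (1 : Matrix δ δ ℂ)).submatrix e e *
        (C ⊗ₖ (1 : Matrix δ δ ℂ)).submatrix e e
      = (D ⊗ₖ (1 : Matrix δ δ ℂ)).submatrix e e * (E ⊗ₖ (1 : Matrix δ δ ℂ)).submatrix e e := by
  rw [Matrix.submatrix_mul_equiv, Matrix.submatrix_mul_equiv]
  simp only [← Matrix.mul_kronecker_mul, one_mul]
  rw [hid]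
  rw [Matrix.submatrix_mul_equiv]
  simp only [← Matrix.mul_kronecker_mul, one_mul]

lemma transport22k {S : Type*} [Fintype S] [DecidableEq S] {δ T : Type*}
    [Fintype δ] [DecidableEq δ] [Fintype T] [DecidableEq T]
    (e : T ≃ S × δ) {A B C D : Matrix S S ℂ} (hid : A * B = C * D) :
    (A ⊗ₖ (1 : Matrix δ δ ℂ)).submatrix e e * (B ⊗ₖ (1 : Matrix δ δ ℂ)).submatrix e e
      = (C ⊗ₖ (1 : Matrix δ δ ℂ)).submatrix e e * (D ⊗ₖ (1 : Matrix δ δ ℂ)).submatrix e e := by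
  rw [Matrix.submatrix_mul_equiv]
  simp only [← Matrix.mul_kronecker_mul, one_mul]
  rw [hid]
  rw [Matrix.submatrix_mul_equiv]
  simp only [← Matrix.mul_kronecker_mul, one_mul]

end FourLeg

section FourLegMul
variable {k m : Type*} [Fintype k] [Fintype m] [DecidableEq k] [DecidableEq m]

lemma Q10_mul (A B : Matrix (k × k) (k × k) ℂ) :
    Q10 (m := m) A * Q10 B = Q10 (A * B) := by
  simp only [Q10]
  rw [leg12_mul, psub_mul]

lemma Q10_one : Q10 (k := k) (m := m) 1 = 1 := by
  simp only [Q10, psub_one, leg12_one]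

lemma Q30_mul (A B : Matrix (k × k) (k × k) ℂ) :
    Q30 (m := m) A * Q30 B = Q30 (A * B) := by
  simp only [Q30]
  rw [leg13_mul, leg13_mul, psub_mul]

lemma Q30_one : Q30 (k := k) (m := m) 1 = 1 := by
  simp only [Q30, psub_one, leg13_one]

lemma Q02_mul (A B : Matrix (k × m) (k × m) ℂ) :
    Q02 (m := m) A * Q02 B = Q02 (A * B) := by
  simp only [Q02]
  rw [leg13_mul, leg12_mul]

lemma Q02_one : Q02 (k := k) (m := m) 1 = 1 := by
  simp only [Q02, leg12_one, leg13_one]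

end FourLegMul

/-- Let `V` be a multiplicative unitary on `K ⊗ K` and `U` a unitary on `K` such that
`V̂ := (1 ⊗ U) ϑ V ϑ (1 ⊗ U*)` is multiplicative and `[V̂₁₂, V₂₃] = 0`.  Then for
every corepresentation `W` of `V` on `H`, the unitary
`η_W := (1_H ⊗ U) ϑ_{K,H} W ϑ_{H,K} (1_H ⊗ U*)` on `H ⊗ K` intertwines the
corepresentation `W × V` with `ι(W) × V` (where `ι(W)` is the trivial
corepresentation on `H`):  `(1_K ⊗ η_W)(W × V) = (ι(W) × V)(1_K ⊗ η_W)`. -/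
theorem eta_intertwines_with_trivial
    {ι h : Type*} [Fintype ι] [DecidableEq ι] [Fintype h] [DecidableEq h]
    (V : Matrix (ι × ι) (ι × ι) ℂ)
    (hVu : V ∈ Matrix.unitaryGroup (ι × ι) ℂ)
    (hpent : leg12 V * leg13 V * leg23 V = leg23 V * leg12 V)
    (U : Matrix ι ι ℂ) (hU : U ∈ Matrix.unitaryGroup ι ℂ)
    -- `V̂ = (1 ⊗ U) ϑ V ϑ (1 ⊗ U*)` is multiplicative
    (hVhat : leg12 (((1 : Matrix ι ι ℂ) ⊗ₖ U) * V.submatrix Prod.swap Prod.swap *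
          ((1 : Matrix ι ι ℂ) ⊗ₖ star U)) *
        leg13 (((1 : Matrix ι ι ℂ) ⊗ₖ U) * V.submatrix Prod.swap Prod.swap *
          ((1 : Matrix ι ι ℂ) ⊗ₖ star U)) *
        leg23 (((1 : Matrix ι ι ℂ) ⊗ₖ U) * V.submatrix Prod.swap Prod.swap *
          ((1 : Matrix ι ι ℂ) ⊗ₖ star U)) =
      leg23 (((1 : Matrix ι ι ℂ) ⊗ₖ U) * V.submatrix Prod.swap Prod.swap *
          ((1 : Matrix ι ι ℂ) ⊗ₖ star U)) *
        leg12 (((1 : Matrix ι ι ℂ) ⊗ₖ U) * V.submatrix Prod.swap Prod.swap *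
          ((1 : Matrix ι ι ℂ) ⊗ₖ star U)))
    -- `[V̂₁₂, V₂₃] = 0`
    (hcomm : leg12 (((1 : Matrix ι ι ℂ) ⊗ₖ U) * V.submatrix Prod.swap Prod.swap *
          ((1 : Matrix ι ι ℂ) ⊗ₖ star U)) * leg23 V =
        leg23 V * leg12 (((1 : Matrix ι ι ℂ) ⊗ₖ U) * V.submatrix Prod.swap Prod.swap *
          ((1 : Matrix ι ι ℂ) ⊗ₖ star U)))
    -- `W` is a corepresentation of `V` on `H`
    (W : Matrix (ι × h) (ι × h) ℂ)
    (hWu : W ∈ Matrix.unitaryGroup (ι × h) ℂ)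
    (hW : leg12 V * leg13 W * leg23 W = leg23 W * leg12 V) :
    -- `η_W ∈ (W × V, ι(W) × V)` on `K ⊗ (H ⊗ K)`
    idTens (a := ι) (((1 : Matrix h h ℂ) ⊗ₖ U) * W.submatrix Prod.swap Prod.swap *
        ((1 : Matrix h h ℂ) ⊗ₖ star U)) * (leg12 W * leg13 V) =
      leg13 V * idTens (a := ι) (((1 : Matrix h h ℂ) ⊗ₖ U) *
        W.submatrix Prod.swap Prod.swap * ((1 : Matrix h h ℂ) ⊗ₖ star U)) := by
  rcases isEmpty_or_nonempty ι with hι | hι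
  · ext p q; exact (hι.false p.1).elim
  haveI := hι
  have hU1 : star U * U = 1 := hU.1
  have hU2 : U * star U = 1 := hU.2
  have hV1 : star V * V = 1 := hVu.1
  have hV2 : V * star V = 1 := hVu.2
  have hW1 : star W * W = 1 := hWu.1
  have hW2 : W * star W = 1 := hWu.2
  have kUsU : ((1 : Matrix ι ι ℂ) ⊗ₖ star U) * ((1 : Matrix ι ι ℂ) ⊗ₖ U) = 1 := by
    rw [← Matrix.mul_kronecker_mul, one_mul, hU1, Matrix.one_kronecker_one]
  have kUUs : ((1 : Matrix ι ι ℂ) ⊗ₖ U) * ((1 : Matrix ι ι ℂ) ⊗ₖ star U) = 1 := by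
    rw [← Matrix.mul_kronecker_mul, one_mul, hU2, Matrix.one_kronecker_one]
  set Vp := V.submatrix Prod.swap Prod.swap with hVpdef
  set Wp := W.submatrix Prod.swap Prod.swap with hWpdef
  set Vt : Matrix (ι × ι) (ι × ι) ℂ :=
    ((1 : Matrix ι ι ℂ) ⊗ₖ star U) * V * ((1 : Matrix ι ι ℂ) ⊗ₖ U) with hVtdef
  set Zm : Matrix (ι × ι) (ι × ι) ℂ := Vp * Vt with hZdef
  -- ===== Part 1 : `Ptilde` on `ι³` from `hVhat` =====
  set a := leg12 (α := ι) (β := ι) (γ := ι) ((1 : Matrix ι ι ℂ) ⊗ₖ U) with hadef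
  set as := leg12 (α := ι) (β := ι) (γ := ι) ((1 : Matrix ι ι ℂ) ⊗ₖ star U) with hasdef
  set b := leg13 (α := ι) (β := ι) (γ := ι) ((1 : Matrix ι ι ℂ) ⊗ₖ U) with hbdef
  set bs := leg13 (α := ι) (β := ι) (γ := ι) ((1 : Matrix ι ι ℂ) ⊗ₖ star U) with hbsdef
  set v21 := leg12 (α := ι) (β := ι) (γ := ι) Vp with hv21def
  set v31 := leg13 (α := ι) (β := ι) (γ := ι) Vp with hv31def
  set v32 := leg23 (α := ι) (β := ι) (γ := ι) Vp with hv32def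
  have f1 : as * a = 1 := by rw [hasdef, hadef, leg12_mul, kUsU, leg12_one]
  have f3 : bs * b = 1 := by rw [hbsdef, hbdef, leg13_mul, kUsU, leg13_one]
  have e12A : a * v21 * as
      = leg12 (((1 : Matrix ι ι ℂ) ⊗ₖ U) * Vp * ((1 : Matrix ι ι ℂ) ⊗ₖ star U)) := by
    rw [hadef, hasdef, hv21def, leg12_mul, leg12_mul]
  have e13A : b * v31 * bs
      = leg13 (((1 : Matrix ι ι ℂ) ⊗ₖ U) * Vp * ((1 : Matrix ι ι ℂ) ⊗ₖ star U)) := by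
    rw [hbdef, hbsdef, hv31def, leg13_mul, leg13_mul]
  have e23A : b * v32 * bs
      = leg23 (((1 : Matrix ι ι ℂ) ⊗ₖ U) * Vp * ((1 : Matrix ι ι ℂ) ⊗ₖ star U)) := by
    rw [hbdef, hbsdef, hv32def, ← leg23_oneKron, ← leg23_oneKron, leg23_mul, leg23_mul]
  have c1 : b * v21 = v21 * b := by
    rw [hbdef, hv21def, ← leg23_oneKron]; exact comm_u3_leg12 U Vp
  have c2 : bs * v21 = v21 * bs := by
    rw [hbsdef, hv21def, ← leg23_oneKron]; exact comm_u3_leg12 (star U) Vp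
  have c3 : b * a = a * b := by
    rw [hbdef, hadef, ← leg23_oneKron]; exact comm_u3_leg12 U _
  have c4 : bs * a = a * bs := by
    rw [hbsdef, hadef, ← leg23_oneKron]; exact comm_u3_leg12 (star U) _
  have c5 : b * as = as * b := by
    rw [hbdef, hasdef, ← leg23_oneKron]; exact comm_u3_leg12 U _
  have c6 : bs * as = as * bs := by
    rw [hbsdef, hasdef, ← leg23_oneKron]; exact comm_u3_leg12 (star U) _
  have c7 : as * v31 = v31 * as := by
    rw [hasdef, hv31def]; exact comm_u2_leg13 (star U) Vp
  have E := hVhat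
  rw [← e12A, ← e13A, ← e23A] at E
  simp only [mul_assoc] at E
  rw [mcancel f3] at E
  rw [mswap' c5.symm] at E
  rw [mswap' c1.symm] at E
  rw [mswap' c3.symm] at E
  rw [mswap' c7] at E
  rw [mswap' c4] at E
  rw [mswap' c2] at E
  rw [c6] at E
  have E2 := congrArg (fun M => bs * M) E
  simp only [mcancel f3] at E2
  have E3 := congrArg (fun M => M * b) E2
  simp only [mul_assoc, f3, mul_one] at E3
  have E4 := congrArg (fun M => as * M) E3
  simp only [mcancel f1] at E4
  have E5 := congrArg (fun M => M * a) E4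
  simp only [mul_assoc, f1, mul_one] at E5
  -- E5 : v21 * (v31 * (as * (v32 * a))) = as * (v32 * (a * v21))
  have hVtp : Vt.submatrix Prod.swap Prod.swap
      = ((star U) ⊗ₖ (1 : Matrix ι ι ℂ)) * Vp * (U ⊗ₖ (1 : Matrix ι ι ℂ)) := by
    rw [hVtdef, ← psub_mul, ← psub_mul, psub_kron1, psub_kron1, ← hVpdef]
  have wtdef : leg23 (α := ι) (Vt.submatrix Prod.swap Prod.swap) = as * (v32 * a) := by
    rw [hVtp, ← leg23_mul, ← leg23_mul, ← leg12_oneKron, ← leg12_oneKron,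
      ← hasdef, ← hadef, ← hv32def, mul_assoc]
  have Pt : v21 * v31 * leg23 (α := ι) (Vt.submatrix Prod.swap Prod.swap)
      = leg23 (α := ι) (Vt.submatrix Prod.swap Prod.swap) * v21 := by
    rw [wtdef]
    simp only [mul_assoc]
    exact E5
  rw [hv21def, hv31def] at Pt
  -- ===== Part 2 : transport `Pt` to `Ptilde'` =====
  have Pt' := transport3 cycB Pt
  rw [TB1, TB2, TB3] at Pt'
  have hVpp : Vp.submatrix Prod.swap Prod.swap = V := by rw [hVpdef]; exact psub_psub V
  have hVtpp : (Vt.submatrix Prod.swap Prod.swap).submatrix Prod.swap Prod.swap = Vt := psub_psub Vt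
  rw [hVpp, hVtpp] at Pt'
  -- Pt' : leg23 Vp * leg12 V * leg13 Vt = leg13 Vt * leg23 Vp
  simp only [mul_assoc] at Pt'
  -- ===== Part 3 : transport `hpent` to `Pent'` =====
  have Pent' := transport3 cycA hpent
  rw [TA1, TA2, TA3, ← hVpdef] at Pent'
  -- Pent' : leg13 Vp * leg23 Vp * leg12 V = leg12 V * leg13 Vp
  -- ===== Part 4 : the intertwining relation `Sx` on `ι³` =====
  have h1 : leg13 (α := ι) (β := ι) (γ := ι) Zm = leg13 Vp * leg13 Vt := by
    rw [hZdef, ← leg13_mul]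
  have Sx : leg12 (α := ι) (β := ι) (γ := ι) V * leg13 Zm = leg13 Zm * leg23 Vp := by
    calc leg12 (α := ι) (β := ι) (γ := ι) V * leg13 Zm
        = leg12 V * leg13 Vp * leg13 Vt := by rw [h1, ← mul_assoc]
      _ = leg13 Vp * leg23 Vp * leg12 V * leg13 Vt := by rw [← Pent']
      _ = leg13 Vp * (leg23 Vp * (leg12 V * leg13 Vt)) := by simp only [mul_assoc]
      _ = leg13 Vp * (leg13 Vt * leg23 Vp) := by rw [Pt']
      _ = leg13 Vp * leg13 Vt * leg23 Vp := by simp only [mul_assoc]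
      _ = leg13 Zm * leg23 Vp := by rw [← h1]
  -- ===== Part 5 : transport `hW` to `A'` =====
  have A' := transport3 cycA hW
  rw [TA1, TA2, TA3, ← hVpdef, ← hWpdef] at A'
  -- A' : leg13 Vp * leg23 Wp * leg12 W = leg12 W * leg13 Vp
  -- ===== Part 6 : the four-leg argument =====
  have R1 := transport3k (tauE (k := ι) (m := h)) hW
  rw [identE1, identE2, identE3] at R1
  have R2 := transport3k (tauE' (k := ι) (m := h)) hW
  rw [identF1, identF2, identF3, ← hWpdef] at R2
  have R3 := transport22k (tauS (k := ι) (m := h)) Sx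
  rw [hVpdef] at R3
  rw [identS1, identS2, identS3] at R3
  -- R3 : Q10 V * idTens (leg13 Zm) = idTens (leg13 Zm) * Q30 V
  have sq10a : Q10 (m := h) (star V) * Q10 V = 1 := by rw [Q10_mul, hV1, Q10_one]
  have sq30b : Q30 (m := h) V * Q30 (star V) = 1 := by rw [Q30_mul, hV2, Q30_one]
  have sq02b : Q02 (m := h) W * Q02 (star W) = 1 := by rw [Q02_mul, hW2, Q02_one]
  have r1 := R1
  simp only [mul_assoc] at r1
  have e1' := congrArg (fun M => M * Q02 (m := h) (star W)) r1
  simp only [mul_assoc, sq02b, mul_one] at e1'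
  have e1 := congrArg (fun M => Q10 (m := h) (star V) * M) e1'
  simp only [mcancel sq10a] at e1
  -- e1 : idTens (leg12 W) = Q10 (star V) * (Q02 W * (Q10 V * Q02 (star W)))
  have sq30a : Q30 (m := h) (star V) * Q30 V = 1 := by rw [Q30_mul, hV1, Q30_one]
  have r2 := R2
  simp only [mul_assoc] at r2
  have e2' := congrArg (fun M => M * Q02 (m := h) (star W)) r2
  simp only [mul_assoc, sq02b, mul_one] at e2'
  have e2 := congrArg (fun M => Q30 (m := h) (star V) * M) e2'
  simp only [mcancel sq30a] at e2
  -- e2 : idTens (leg23 Wp) = Q30 (star V) * (Q02 W * (Q30 V * Q02 (star W)))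
  have t1 := congrArg (fun M => Q10 (m := h) (star V) * M) R3
  simp only [mcancel sq10a] at t1
  have t2 := congrArg (fun M => M * Q30 (m := h) (star V)) t1
  simp only [mul_assoc, sq30b, mul_one] at t2
  have e3s := t2.symm
  -- e3s : Q10 (star V) * idTens (leg13 Zm) = idTens (leg13 Zm) * Q30 (star V)
  have R4W := commQ02_lift W Zm
  have R4Ws := commQ02_lift (star W) Zm
  have chain : idTens (a := ι) (leg12 W) * idTens (a := ι) (leg13 (β := h) Zm)
      = idTens (a := ι) (leg13 (β := h) Zm) * idTens (a := ι) (leg23 Wp) := by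
    calc idTens (a := ι) (leg12 W) * idTens (a := ι) (leg13 (β := h) Zm)
        = Q10 (star V) * (Q02 W * (Q10 V * (Q02 (star W)
            * idTens (a := ι) (leg13 (β := h) Zm)))) := by
          rw [e1]; simp only [mul_assoc]
      _ = Q10 (star V) * (Q02 W * (Q10 V * (idTens (a := ι) (leg13 (β := h) Zm)
            * Q02 (star W)))) := by rw [R4Ws]
      _ = Q10 (star V) * (Q02 W * (idTens (a := ι) (leg13 (β := h) Zm)
            * (Q30 V * Q02 (star W)))) := by rw [mswap' R3]
      _ = Q10 (star V) * (idTens (a := ι) (leg13 (β := h) Zm)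
            * (Q02 W * (Q30 V * Q02 (star W)))) := by rw [mswap' R4W]
      _ = idTens (a := ι) (leg13 (β := h) Zm)
            * (Q30 (star V) * (Q02 W * (Q30 V * Q02 (star W)))) := by rw [mswap' e3s]
      _ = idTens (a := ι) (leg13 (β := h) Zm) * idTens (a := ι) (leg23 Wp) := by
          rw [← e2]
  rw [idTens_mul, idTens_mul] at chain
  have G2 : leg12 W * leg13 (β := h) Zm = leg13 (β := h) Zm * leg23 Wp :=
    idTens_inj _ _ chain
  -- ===== Part 7 : `G'` on the triple `ι × h × ι` =====
  have h2 : leg13 (α := ι) (β := h) (γ := ι) Zm = leg13 Vp * leg13 Vt := by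
    rw [hZdef, ← leg13_mul]
  have key : leg13 (β := h) Vp * (leg23 Wp * (leg12 W * leg13 Vt))
      = leg13 (β := h) Vp * (leg13 Vt * leg23 Wp) := by
    calc leg13 (β := h) Vp * (leg23 Wp * (leg12 W * leg13 Vt))
        = leg13 Vp * leg23 Wp * leg12 W * leg13 Vt := by simp only [mul_assoc]
      _ = leg12 W * leg13 Vp * leg13 Vt := by rw [A']
      _ = leg12 W * leg13 Zm := by rw [mul_assoc, ← h2]
      _ = leg13 Zm * leg23 Wp := G2
      _ = leg13 Vp * leg13 Vt * leg23 Wp := by rw [h2]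
      _ = leg13 (β := h) Vp * (leg13 Vt * leg23 Wp) := by simp only [mul_assoc]
  have fVp : leg13 (β := h) ((star V).submatrix Prod.swap Prod.swap) * leg13 Vp = 1 := by
    rw [leg13_mul, hVpdef, psub_mul, hV1, psub_one, leg13_one]
  have G' : leg23 (α := ι) Wp * (leg12 W * leg13 Vt) = leg13 Vt * leg23 Wp := by
    have hkey := congrArg
      (fun M => leg13 (β := h) ((star V).submatrix Prod.swap Prod.swap) * M) key
    simp only [mcancel fVp] at hkey
    exact hkey
  -- ===== Part 8 : conclusion =====
  have hVt2 : Vt * ((1 : Matrix ι ι ℂ) ⊗ₖ star U) = ((1 : Matrix ι ι ℂ) ⊗ₖ star U) * V := by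
    rw [hVtdef, mul_assoc, kUUs, mul_one]
  have hVt3 : ((1 : Matrix ι ι ℂ) ⊗ₖ U) * Vt = V * ((1 : Matrix ι ι ℂ) ⊗ₖ U) := by
    rw [hVtdef, ← mul_assoc, ← mul_assoc, kUUs, one_mul]
  have cw : leg23 (α := ι) ((1 : Matrix h h ℂ) ⊗ₖ star U) * leg12 W
      = leg12 W * leg23 ((1 : Matrix h h ℂ) ⊗ₖ star U) := comm_u3_leg12 (star U) W
  have hx : leg23 (α := ι) ((1 : Matrix h h ℂ) ⊗ₖ star U) * leg13 (β := h) V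
      = leg13 Vt * leg13 ((1 : Matrix ι ι ℂ) ⊗ₖ star U) := by
    rw [leg23_oneKron, leg13_mul, leg13_mul, hVt2]
  have hy : leg23 (α := ι) ((1 : Matrix h h ℂ) ⊗ₖ U) * leg13 (β := h) Vt
      = leg13 V * leg13 ((1 : Matrix ι ι ℂ) ⊗ₖ U) := by
    rw [leg23_oneKron, leg13_mul, leg13_mul, hVt3]
  have hWhat : idTens (a := ι) (((1 : Matrix h h ℂ) ⊗ₖ U) * Wp *
        ((1 : Matrix h h ℂ) ⊗ₖ star U))
      = leg23 ((1 : Matrix h h ℂ) ⊗ₖ U) * (leg23 (α := ι) Wp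
          * leg23 ((1 : Matrix h h ℂ) ⊗ₖ star U)) := by
    rw [idTens_eq_leg23, ← leg23_mul, ← leg23_mul, mul_assoc]
  rw [hWhat]
  simp only [mul_assoc]
  rw [mswap' cw]
  rw [hx]
  rw [mswap3 G']
  rw [mswap' hy]
  rw [← leg23_oneKron, ← leg23_oneKron]
end
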